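/- arXiv:2002.11316 — 5 statements merged into one kernel-verified Lean document; each statement's English description precedes it below -/
import Mathlib

section
/- In a pointed unital quantum B-algebra (with unit u satisfying u → x = u ⇝ x = x), one has (x → y˜⁻)˜⁻ = x → y˜⁻ and (x ⇝ y⁻˜)⁻˜ = x ⇝ y⁻˜ for all x, y. -/
/-!
With `→ = arr`, `⇝ = sq`, `a⁻ = a → d` and `a˜ = a ⇝ d`, every `a⁻` satisfies `a⁻˜⁻ ≤ a⁻` and every `a˜`
satisfies `a˜⁻˜ ≤ a˜`. Such closed elements stay closed under `x → _`, resp. `x ⇝ _`: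
contraposing `x ≤ t ⇝ A` (with `t = x → A`) twice gives `x ≤ t˜⁻ ⇝ A˜⁻ ≤ t˜⁻ ⇝ A`, i.e.
`t˜⁻ ≤ t`. A unit `u` enters through `a ⇝ b ≤ a → b`, which lets one exchange the two
arguments on the left of `x ≤ y ⇝ z` halfway through.
-/

class QuantumBAlgebra (X : Type*) extends PartialOrder X where
  arr : X → X → X
  sq : X → X → X
  qb1 : ∀ x y z : X, arr y z ≤ arr (arr x y) (arr x z)
  qb2 : ∀ x y z : X, sq y z ≤ arr (sq x y) (sq x z)
  qb3 : ∀ x y z : X, y ≤ z → arr x y ≤ arr x z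
  qb4 : ∀ x y z : X, x ≤ arr y z ↔ y ≤ sq x z

open QuantumBAlgebra

namespace QuantumBAlgebra

variable {X : Type*} [QuantumBAlgebra X] {u : X}

theorem sq_mono_right {a b c : X} (h : b ≤ c) : sq a b ≤ sq a c :=
  (qb4 a (sq a b) c).mp <| ((qb4 a (sq a b) b).mpr le_rfl).trans (qb3 _ _ _ h)

theorem arr_anti_left {a b c : X} (h : a ≤ b) : arr b c ≤ arr a c :=
  (qb4 (arr b c) a c).mpr <| h.trans ((qb4 (arr b c) b c).mp le_rfl)

theorem sq_anti_left {a b c : X} (h : a ≤ b) : sq b c ≤ sq a c :=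
  (qb4 a (sq b c) c).mp <| h.trans ((qb4 b (sq b c) c).mpr le_rfl)

theorem le_sq_arr (a d : X) : a ≤ sq (arr a d) d :=
  (qb4 (arr a d) a d).mp le_rfl

theorem le_arr_sq (a d : X) : a ≤ arr (sq a d) d :=
  (qb4 a (sq a d) d).mpr le_rfl

theorem arr_sq_arr_le (a d : X) : arr (sq (arr a d) d) d ≤ arr a d :=
  arr_anti_left (le_sq_arr a d)

theorem sq_arr_sq_le (a d : X) : sq (arr (sq a d) d) d ≤ sq a d :=
  sq_anti_left (le_arr_sq a d)

theorem arr_le_sq_arr_arr (a b d : X) : arr a b ≤ sq (arr b d) (arr a d) :=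
  (qb4 (arr b d) (arr a b) (arr a d)).mp (qb1 a b d)

theorem sq_le_sq_sq_sq (a b d : X) : sq a b ≤ sq (sq b d) (sq a d) :=
  (qb4 (sq b d) (sq a b) (sq a d)).mp (qb2 a b d)

theorem sq_le_arr (hu : ∀ x : X, sq u x = x) (a b : X) : sq a b ≤ arr a b := by
  simpa only [hu] using qb2 u a b

theorem le_sq_comm (hu : ∀ x : X, sq u x = x) {a b c : X} (h : a ≤ sq b c) : b ≤ sq a c :=
  (qb4 a b c).mp (h.trans (sq_le_arr hu b c))

theorem arr_sq_arr_eq_of_arr_sq_le (hu : ∀ x : X, sq u x = x) {a d : X}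
    (ha : arr (sq a d) d ≤ a) (x : X) :
    arr (sq (arr x a) d) d = arr x a := by
  set t := arr x a
  refine le_antisymm ?_ (le_arr_sq t d)
  have hx : x ≤ sq (sq a d) (sq t d) :=
    ((qb4 t x a).mp le_rfl).trans (sq_le_sq_sq_sq t a d)
  have hx' : x ≤ sq (arr (sq t d) d) (arr (sq a d) d) :=
    ((qb4 x (sq a d) (sq t d)).mpr (le_sq_comm hu hx)).trans (arr_le_sq_arr_arr _ _ d)
  exact (qb4 _ x a).mpr (hx'.trans (sq_mono_right ha))

theorem sq_arr_sq_eq_of_sq_arr_le (hu : ∀ x : X, sq u x = x) {b d : X}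
    (hb : sq (arr b d) d ≤ b) (x : X) :
    sq (arr (sq x b) d) d = sq x b := by
  set t := sq x b
  refine le_antisymm ?_ (le_sq_arr t d)
  have hx : x ≤ sq (sq (arr t d) d) (sq (arr b d) d) :=
    (((qb4 x t b).mpr le_rfl).trans (arr_le_sq_arr_arr t b d)).trans (sq_le_sq_sq_sq _ _ d)
  exact le_sq_comm hu (hx.trans (sq_mono_right hb))

end QuantumBAlgebra

theorem stmt8 {X : Type*} [QuantumBAlgebra X] (d u : X)
    (hu : ∀ x : X, arr u x = x ∧ sq u x = x) (x y : X) :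
    arr (sq (arr x (arr (sq y d) d)) d) d = arr x (arr (sq y d) d) ∧
    sq (arr (sq x (sq (arr y d) d)) d) d = sq x (sq (arr y d) d) :=
  have hu' : ∀ x : X, sq u x = x := fun x => (hu x).2
  ⟨arr_sq_arr_eq_of_arr_sq_le hu' (arr_sq_arr_le _ d) x,
    sq_arr_sq_eq_of_sq_arr_le hu' (sq_arr_sq_le _ d) x⟩
end

section
/- In a weakly involutive quantum B-algebra, x˜ → y = y⁻ ⇝ x and x⁻ ⇝ y = y˜ → x for all x, y. -/
open QuantumBAlgebra

/-! Both identities are instances of the exchange law `x → (y ⇝ d) = y ⇝ (x → d)`, after writing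
`y = y⁻˜` and `x = x˜⁻` (resp. `y = y˜⁻`, `x = x⁻˜`). One inequality of the exchange law holds
for every `d`; the other follows from the two contraposition laws `x → y ≤ y⁻ ⇝ x⁻` and
`x ⇝ y ≤ y˜ ⇝ x˜` once `⁻` and `˜` are mutually inverse. -/

namespace QuantumBAlgebra

variable {X : Type*} [QuantumBAlgebra X]

def IsWeaklyInvolutive (d : X) : Prop :=
  ∀ x : X, sq (arr x d) d = x ∧ arr (sq x d) d = x

lemma le_arr_sq_self (x z : X) : x ≤ arr (sq x z) z :=
  (qb4 x (sq x z) z).mpr le_rfl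

lemma arr_le_sq_arr_arr_s11 (x y z : X) : arr x y ≤ sq (arr y z) (arr x z) :=
  (qb4 (arr y z) (arr x y) (arr x z)).mp (qb1 x y z)

lemma sq_le_sq_sq_sq_s11 (x y z : X) : sq x y ≤ sq (sq y z) (sq x z) :=
  (qb4 (sq y z) (sq x y) (sq x z)).mp (qb2 x y z)

lemma arr_sq_le_sq_arr (x y z : X) : arr x (sq y z) ≤ sq y (arr x z) :=
  (qb4 y (arr x (sq y z)) (arr x z)).mp <|
    (le_arr_sq_self y z).trans (qb1 x (sq y z) z)

lemma IsWeaklyInvolutive.sq_arr_le_arr_sq {d : X} (hd : IsWeaklyInvolutive d) (x y : X) :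
    sq y (arr x d) ≤ arr x (sq y d) := by
  set p := sq y (arr x d)
  have hx : x ≤ arr p (sq y d) := by
    simpa only [(hd x).1] using qb2 y (arr x d) d
  have hp : arr p (sq y d) ≤ sq y (arr p d) := by
    simpa only [(hd y).2] using arr_le_sq_arr_arr_s11 p (sq y d) d
  have hy : sq y (arr p d) ≤ sq p (sq y d) := by
    simpa only [(hd p).1] using sq_le_sq_sq_sq_s11 y (arr p d) d
  exact (qb4 p x (sq y d)).mpr (hx.trans (hp.trans hy))

lemma IsWeaklyInvolutive.arr_sq_eq_sq_arr {d : X} (hd : IsWeaklyInvolutive d) (x y : X) :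
    arr x (sq y d) = sq y (arr x d) :=
  le_antisymm (arr_sq_le_sq_arr x y d) (hd.sq_arr_le_arr_sq x y)

end QuantumBAlgebra

theorem stmt11 {X : Type*} [QuantumBAlgebra X] (d : X)
    (hwi : ∀ x : X, sq (arr x d) d = x ∧ arr (sq x d) d = x) (x y : X) :
    arr (sq x d) y = sq (arr y d) x ∧ sq (arr x d) y = arr (sq y d) x := by
  have hd : IsWeaklyInvolutive d := hwi
  constructor
  · simpa only [(hwi x).2, (hwi y).1] using hd.arr_sq_eq_sq_arr (sq x d) (arr y d)
  · simpa only [(hwi x).1, (hwi y).2] using (hd.arr_sq_eq_sq_arr (sq y d) (arr x d)).symm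
end

section
/- In a weakly involutive integral quantum B-algebra (a weakly involutive unital quantum B-algebra whose unit u is the greatest element), the distinguished element d is the bottom element of (X, ≤). -/
open QuantumBAlgebra

theorem stmt17 {X : Type*} [QuantumBAlgebra X] (d u : X)
    (hu : ∀ x : X, arr u x = x ∧ sq u x = x)
    (htop : ∀ x : X, x ≤ u)
    (hwi : ∀ x : X, sq (arr x d) d = x ∧ arr (sq x d) d = x) :
    ∀ x : X, d ≤ x := by
  have hdd : sq d d = u := by simpa only [(hu d).1] using (hwi u).1
  intro x
  calc d ≤ arr (sq x d) d := (qb4 d (sq x d) d).mpr (hdd ▸ htop (sq x d))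
    _ = x := (hwi x).2
end

section
/- Let X be a weakly involutive quantum B-algebra, τ a good map (i.e., (τ(x⁻))˜ = (τ(x˜))⁻ for all x), and define σx = (τ(x⁻))˜. Then σ is also good, and τx = (σ(x⁻))˜ = (σ(x˜))⁻ for all x. Moreover τ is decreasing (τx ≤ x for all x) if and only if σ is increasing (x ≤ σx for all x), and τ is isotone if and only if σ is isotone. -/
open QuantumBAlgebra

/-!
Write `x⁻ = x → d`, `x˜ = x ⇝ d` and `τ^∨ x = (τ(x⁻))˜` (`dual d τ`), so `σ = τ^∨`. Goodness of `τ`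
gives `σ(x⁻) = (τx)⁻` and `σ(x˜) = (τx)˜`, hence `τ = σ^∨`. Both negations are
order-reversing bijections, so `(·)^∨` preserves monotonicity, and the adjunction (QB4) turns
`τ(x⁻) ≤ x⁻` into `x ≤ τ^∨ x`; applying these facts to `τ` and to `σ` gives all four claims.
-/

namespace QuantumBAlgebra

variable {X : Type*} [QuantumBAlgebra X] {d : X}

def dual (d : X) (τ : X → X) : X → X := fun x => sq (τ (arr x d)) d

def IsGood (d : X) (τ : X → X) : Prop := ∀ x, sq (τ (arr x d)) d = arr (τ (sq x d)) d

theorem arr_le_arr_iff (hsa : ∀ x : X, sq (arr x d) d = x) {x y : X} :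
    arr y d ≤ arr x d ↔ x ≤ y := by
  rw [qb4, hsa]

theorem sq_le_sq_iff (has : ∀ x : X, arr (sq x d) d = x) {x y : X} :
    sq y d ≤ sq x d ↔ x ≤ y := by
  rw [← qb4, has]

theorem dual_arr (hsa : ∀ x : X, sq (arr x d) d = x) {τ : X → X} (hτ : IsGood d τ) (x : X) :
    dual d τ (arr x d) = arr (τ x) d := by
  rw [dual, hτ, hsa]

theorem dual_sq (has : ∀ x : X, arr (sq x d) d = x) (τ : X → X) (x : X) :
    dual d τ (sq x d) = sq (τ x) d := by
  rw [dual, has]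

theorem dual_dual (hsa : ∀ x : X, sq (arr x d) d = x) {τ : X → X} (hτ : IsGood d τ) :
    dual d (dual d τ) = τ :=
  funext fun x => by rw [dual, dual_arr hsa hτ, hsa]

theorem arr_dual_sq (has : ∀ x : X, arr (sq x d) d = x) (τ : X → X) (x : X) :
    arr (dual d τ (sq x d)) d = τ x := by
  rw [dual_sq has, has]

theorem isGood_dual (hsa : ∀ x : X, sq (arr x d) d = x) (has : ∀ x : X, arr (sq x d) d = x)
    {τ : X → X} (hτ : IsGood d τ) : IsGood d (dual d τ) := fun x => by
  rw [← dual, dual_dual hsa hτ, arr_dual_sq has]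

theorem le_dual_of_apply_le {τ : X → X} (hτ : ∀ x, τ x ≤ x) (x : X) : x ≤ dual d τ x :=
  (qb4 _ _ _).mp (hτ (arr x d))

theorem dual_le_of_le_apply (hsa : ∀ x : X, sq (arr x d) d = x)
    (has : ∀ x : X, arr (sq x d) d = x) {σ : X → X} (hσ : ∀ x, x ≤ σ x) (x : X) :
    dual d σ x ≤ x :=
  calc dual d σ x ≤ sq (arr x d) d := (sq_le_sq_iff has).mpr (hσ (arr x d))
    _ = x := hsa x

theorem monotone_dual (hsa : ∀ x : X, sq (arr x d) d = x)
    (has : ∀ x : X, arr (sq x d) d = x) {τ : X → X} (hτ : Monotone τ) :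
    Monotone (dual d τ) := fun _ _ hxy =>
  (sq_le_sq_iff has).mpr (hτ ((arr_le_arr_iff hsa).mpr hxy))

end QuantumBAlgebra

theorem stmt18 {X : Type*} [QuantumBAlgebra X] (d : X)
    (hwi : ∀ x : X, sq (arr x d) d = x ∧ arr (sq x d) d = x)
    (τ : X → X) (hgood : ∀ x : X, sq (τ (arr x d)) d = arr (τ (sq x d)) d)
    (σ : X → X) (hσ : ∀ x : X, σ x = sq (τ (arr x d)) d) :
    (∀ x : X, sq (σ (arr x d)) d = arr (σ (sq x d)) d) ∧
    (∀ x : X, τ x = sq (σ (arr x d)) d ∧ τ x = arr (σ (sq x d)) d) ∧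
    ((∀ x : X, τ x ≤ x) ↔ (∀ x : X, x ≤ σ x)) ∧
    (Monotone τ ↔ Monotone σ) := by
  have hsa : ∀ x : X, sq (arr x d) d = x := fun x => (hwi x).1
  have has : ∀ x : X, arr (sq x d) d = x := fun x => (hwi x).2
  obtain rfl : σ = dual d τ := funext hσ
  have hττ : dual d (dual d τ) = τ := dual_dual hsa hgood
  refine ⟨isGood_dual hsa has hgood,
    fun x => ⟨(congrFun hττ x).symm, (arr_dual_sq has _ x).symm⟩,
    ⟨le_dual_of_apply_le, fun h => hττ ▸ dual_le_of_le_apply hsa has h⟩,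
    ⟨monotone_dual hsa has, fun h => hττ ▸ monotone_dual hsa has h⟩⟩
end

section
/- Let X be a weakly involutive quantum B-algebra and (τ, σ) a synchronized pair of good maps (σx = (τ(x⁻))˜ = (τ(x˜))⁻ and τx = (σ(x⁻))˜ = (σ(x˜))⁻). Then: (1) τ∘σ = σ if and only if σ∘τ = τ; (2) τ∘τ = τ if and only if σ∘σ = σ. -/
open QuantumBAlgebra

namespace Equiv

theorem conj_comp_self_eq {α β : Type*} (e : α ≃ β) {f : α → α} (h : f ∘ f = f) :
    e.conj f ∘ e.conj f = e.conj f := by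
  rw [← conj_comp, h]

theorem comp_eq_right_of_conj_eq {α : Type*} (e : α ≃ α) {f g : α → α} (hg : e.conj f = g)
    (hf : e.conj g = f) (h : f ∘ g = g) : g ∘ f = f := by
  calc g ∘ f = e.conj (f ∘ g) := by rw [conj_comp, hg, hf]
    _ = f := by rw [h, hf]

end Equiv

namespace QuantumBAlgebra

variable {X : Type*} [QuantumBAlgebra X]

def sqEquiv (d : X) (hwi : ∀ x : X, sq (arr x d) d = x ∧ arr (sq x d) d = x) : X ≃ X where
  toFun x := sq x d
  invFun x := arr x d
  left_inv x := (hwi x).2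
  right_inv x := (hwi x).1

theorem sqEquiv_conj_of_sync (d : X) (hwi : ∀ x : X, sq (arr x d) d = x ∧ arr (sq x d) d = x)
    {τ σ : X → X} (hsync : ∀ x : X, σ x = sq (τ (arr x d)) d ∧ σ x = arr (τ (sq x d)) d) :
    (sqEquiv d hwi).conj τ = σ ∧ (sqEquiv d hwi).conj σ = τ := by
  refine ⟨funext fun x => ((hsync x).1).symm, funext fun x => ?_⟩
  have hσ : σ (arr x d) = arr (τ x) d := by rw [(hsync (arr x d)).2, (hwi x).1]
  change sq (σ (arr x d)) d = τ x
  rw [hσ, (hwi (τ x)).1]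

end QuantumBAlgebra

theorem stmt19 {X : Type*} [QuantumBAlgebra X] (d : X)
    (hwi : ∀ x : X, sq (arr x d) d = x ∧ arr (sq x d) d = x)
    (τ σ : X → X)
    (hsync : ∀ x : X, σ x = sq (τ (arr x d)) d ∧ σ x = arr (τ (sq x d)) d) :
    (τ ∘ σ = σ ↔ σ ∘ τ = τ) ∧ (τ ∘ τ = τ ↔ σ ∘ σ = σ) := by
  obtain ⟨hσ, hτ⟩ := sqEquiv_conj_of_sync d hwi hsync
  refine ⟨⟨Equiv.comp_eq_right_of_conj_eq _ hσ hτ, Equiv.comp_eq_right_of_conj_eq _ hτ hσ⟩,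
    ⟨fun h => ?_, fun h => ?_⟩⟩
  · exact hσ ▸ Equiv.conj_comp_self_eq _ h
  · exact hτ ▸ Equiv.conj_comp_self_eq _ h
end
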